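/- (Proposition on Diag) Let M be an (A,A)-bimodule, let c: M → A^{Hom^A_A(M,A)} be the canonical homomorphism c(m) = (ω(m))_{ω ∈ Hom^A_A(M,A)}, and let Diag(M) be the image of c, a diagonal bimodule. Then for every bimodule homomorphism φ: M → N into a diagonal bimodule N there exists a unique bimodule homomorphism Diag(φ): Diag(M) → N such that φ = Diag(φ) ∘ c. -/

import Mathlib

set_option maxHeartbeats 1000000
set_option synthInstance.maxHeartbeats 400000

open TensorProduct MulOpposite

universe uK uA uM uN

section Diag
variable (K : Type uK) (A : Type uA) [CommRing K] [Ring A] [Algebra K A]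

/-- `A` as a bimodule over itself (a bimodule is a module over `A ⊗[K] Aᵐᵒᵖ`). -/
noncomputable def bimoduleBA : Module (A ⊗[K] Aᵐᵒᵖ) A := TensorProduct.Algebra.module

attribute [local instance] bimoduleBA

/-- A bimodule is *diagonal* if there is an injective bimodule homomorphism `M → A^ι`
for some index set `ι`. -/
def IsDiagonalBimodule (M : Type uM) [AddCommGroup M] [Module (A ⊗[K] Aᵐᵒᵖ) M] : Prop :=
  ∃ (ι : Type (max uA uM)) (f : M →ₗ[A ⊗[K] Aᵐᵒᵖ] (ι → A)), Function.Injective f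

variable (M : Type uM) [AddCommGroup M] [Module (A ⊗[K] Aᵐᵒᵖ) M]

/-- The canonical bimodule homomorphism `c : M → A^{Hom(M,A)}`, `c m = (ω m)_ω`, where
`Hom(M,A)` is the set of bimodule homomorphisms `M → A`. -/
noncomputable def cMap : M →ₗ[A ⊗[K] Aᵐᵒᵖ] ((M →ₗ[A ⊗[K] Aᵐᵒᵖ] A) → A) :=
  LinearMap.pi fun ω => ω

/-- `Diag(M)`: the image of the canonical map `c : M → A^{Hom(M,A)}`, a diagonal
bimodule. -/
noncomputable def diagSub : Submodule (A ⊗[K] Aᵐᵒᵖ) ((M →ₗ[A ⊗[K] Aᵐᵒᵖ] A) → A) :=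
  LinearMap.range (cMap K A M)

theorem LinearMap.existsUnique_eq_comp_of_surjective {R M N Q : Type*} [Ring R]
    [AddCommGroup M] [AddCommGroup N] [AddCommGroup Q] [Module R M] [Module R N] [Module R Q]
    {g : M →ₗ[R] Q} (hg : Function.Surjective g) {φ : M →ₗ[R] N}
    (h : LinearMap.ker g ≤ LinearMap.ker φ) :
    ∃! ψ : Q →ₗ[R] N, φ = ψ ∘ₗ g := by
  refine ⟨(LinearMap.ker g).liftQ φ h ∘ₗ (g.quotKerEquivOfSurjective hg).symm.toLinearMap,
    ?_, fun ψ hψ => ?_⟩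
  · ext m
    simp
  · rw [← LinearMap.cancel_right hg, ← hψ]
    ext m
    simp

theorem ker_cMap_le_ker {N : Type*} [AddCommGroup N] [Module (A ⊗[K] Aᵐᵒᵖ) N]
    (hN : IsDiagonalBimodule K A N) (φ : M →ₗ[A ⊗[K] Aᵐᵒᵖ] N) :
    LinearMap.ker (cMap K A M) ≤ LinearMap.ker φ := by
  obtain ⟨ι, f, hf⟩ := hN
  intro m hm
  have hω : ∀ ω : M →ₗ[A ⊗[K] Aᵐᵒᵖ] A, ω m = 0 := by
    simpa [cMap, LinearMap.ker_pi, Submodule.mem_iInf] using hm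
  -- each coordinate of `f ∘ φ` is a bimodule homomorphism `M → A`
  exact (map_eq_zero_iff f hf).mp (funext fun i => hω ((LinearMap.proj i).comp (f.comp φ)))

/-- For every bimodule homomorphism `φ : M → N` into a diagonal bimodule `N`, there is a
unique bimodule homomorphism `Diag(φ) : Diag(M) → N` with `φ = Diag(φ) ∘ c`. -/
theorem diag_universal_property
    (N : Type uN) [AddCommGroup N] [Module (A ⊗[K] Aᵐᵒᵖ) N]
    (hN : IsDiagonalBimodule K A N) (φ : M →ₗ[A ⊗[K] Aᵐᵒᵖ] N) :
    ∃! ψ : (diagSub K A M) →ₗ[A ⊗[K] Aᵐᵒᵖ] N,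
      φ = ψ ∘ₗ (cMap K A M).rangeRestrict :=
  -- naming `Q` makes its group instance synthesized rather than unified (which times out)
  LinearMap.existsUnique_eq_comp_of_surjective (Q := diagSub K A M)
    (cMap K A M).surjective_rangeRestrict
    ((LinearMap.ker_rangeRestrict _).trans_le (ker_cMap_le_ker K A M hN φ))

end Diag
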